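/- For the uniform Bernoulli mixture P = ∫_0^1 P_p dp on {0,1}^ℕ and any finite word w = d_1⋯d_n, the conditioned measure τ_w(P_ℕ) equals ∫_0^1 p^{k}(1-p)^{n-k} P_p dp, where k is the number of 1's in w. Hence V_P = span{∫_0^1 p^k(1-p)^{n-k} P_p dp : 0 ≤ k ≤ n, n ∈ ℕ} has countable algebraic dimension (it is the span of a countable set), whereas span{P_p : p ∈ [0,1]} has no countable spanning set. -/

import Mathlib

open MeasureTheory Filter Topology

/-- One-sided Bernoulli(`p`) product measure on `{0,1}^ℕ`, characterized on cylinders. -/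
def IsBernoulli (p : ℝ) (μ : Measure (ℕ → Bool)) : Prop :=
  IsProbabilityMeasure μ ∧
    ∀ (n : ℕ) (w : Fin n → Bool),
      μ {x | ∀ i : Fin n, x (i : ℕ) = w i} =
        ∏ i : Fin n, (if w i then ENNReal.ofReal p else ENNReal.ofReal (1 - p))

/-- The `n`-fold one-sided shift on `{0,1}^ℕ`. -/
def shiftN (n : ℕ) : (ℕ → Bool) → (ℕ → Bool) := fun x k => x (k + n)

/-- The cylinder set `[w]`. -/
def cylN {n : ℕ} (w : Fin n → Bool) : Set (ℕ → Bool) := {x | ∀ i : Fin n, x (i : ℕ) = w i}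

/-- `τ_w(Q)(B) = Q([w] ∩ σ^{-n} B)`. -/
noncomputable def tauMeas (Q : Measure (ℕ → Bool)) {n : ℕ} (w : Fin n → Bool) :
    Measure (ℕ → Bool) :=
  (Q.restrict (cylN w)).map (shiftN n)

/-- The number of 1's in the word `w`. -/
def ones {n : ℕ} (w : Fin n → Bool) : ℕ := (Finset.univ.filter fun i => w i = true).card

/-- The weak*-realization of a measure as the functional `f ↦ ∫ f dμ`. -/
noncomputable def funcOf (μ : Measure (ℕ → Bool)) : C((ℕ → Bool), ℝ) → ℝ :=
  fun f => ∫ x, f x ∂μ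

/-!
Under the Bernoulli measure `P_p` the cylinder `[w]` is independent of the events `σ⁻ⁿ B`, so
`τ_w(P_p) = P_p[w] • P_p = p^k (1-p)^(n-k) • P_p`; integrating over `p` gives the formula for
`τ_w(P_ℕ)`. The measures `τ_w(P_ℕ)` are indexed by the countably many finite words. Testing `P_p`
against the indicator of the all-ones cylinder of length `n` yields the moment sequence `pⁿ`;
distinct geometric sequences are linearly independent, so the `P_p`, `p ∈ [0,1]`, form an
uncountable independent family, which cannot fit in the span of a countable set.
-/

lemma measurable_shiftN (n : ℕ) : Measurable (shiftN n) :=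
  measurable_pi_lambda _ fun k => measurable_pi_apply (k + n)

lemma cylN_eq_preimage {n : ℕ} (w : Fin n → Bool) :
    cylN w = (fun x (i : Fin n) => x i) ⁻¹' {w} := by
  ext x
  simp [cylN, funext_iff]

lemma measurableSet_cylN {n : ℕ} (w : Fin n → Bool) : MeasurableSet (cylN w) := by
  rw [cylN_eq_preimage]
  exact (measurable_pi_lambda _ fun i => measurable_pi_apply _) (measurableSet_singleton w)

lemma isClopen_cylN {n : ℕ} (w : Fin n → Bool) : IsClopen (cylN w) := by
  rw [cylN_eq_preimage]
  exact (isClopen_discrete {w}).preimage (by fun_prop)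

lemma cylN_append {n m : ℕ} (w : Fin n → Bool) (v : Fin m → Bool) :
    cylN (Fin.append w v) = cylN w ∩ shiftN n ⁻¹' cylN v := by
  ext x
  simp only [cylN, Set.mem_ofPred_eq, Set.mem_inter_iff, Set.mem_preimage, shiftN,
    Fin.forall_fin_add, Fin.append_left, Fin.append_right, Fin.val_castAdd, Fin.val_natAdd,
    Nat.add_comm n]

lemma cylN_inter_cylN_of_le {n m : ℕ} (h : n ≤ m) (w : Fin n → Bool) (v : Fin m → Bool)
    (hne : (cylN w ∩ cylN v).Nonempty) : cylN w ∩ cylN v = cylN v := by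
  obtain ⟨y, hyw, hyv⟩ := hne
  refine Set.inter_eq_right.2 fun x hx i => ?_
  have hi : (i : ℕ) < m := i.2.trans_le h
  exact (hx ⟨i, hi⟩).trans ((hyv ⟨i, hi⟩).symm.trans (hyw i))

def initialCylinders : Set (Set (ℕ → Bool)) := {s | ∃ (n : ℕ) (w : Fin n → Bool), s = cylN w}

lemma isPiSystem_initialCylinders : IsPiSystem initialCylinders := by
  rintro _ ⟨n, w, rfl⟩ _ ⟨m, v, rfl⟩ hne
  rcases le_total n m with h | h
  · exact ⟨m, v, cylN_inter_cylN_of_le h w v hne⟩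
  · rw [Set.inter_comm] at hne ⊢
    exact ⟨n, w, cylN_inter_cylN_of_le h v w hne⟩

lemma generateFrom_initialCylinders :
    MeasurableSpace.generateFrom initialCylinders = MeasurableSpace.pi := by
  refine le_antisymm (MeasurableSpace.generateFrom_le ?_) ?_
  · rintro _ ⟨n, w, rfl⟩
    exact measurableSet_cylN w
  · have prefix_measurable (n : ℕ) :
        Measurable[MeasurableSpace.generateFrom initialCylinders] (fun x (i : Fin n) => x i) :=
      @measurable_to_countable' _ _ _ _ (MeasurableSpace.generateFrom initialCylinders) _
        fun w => MeasurableSpace.measurableSet_generateFrom ⟨n, w, (cylN_eq_preimage w).symm⟩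
    exact iSup_le fun i =>
      ((measurable_pi_apply (Fin.last i)).comp (prefix_measurable (i + 1))).comap_le

lemma tauMeas_apply (Q : Measure (ℕ → Bool)) {n : ℕ} (w : Fin n → Bool) {B : Set (ℕ → Bool)}
    (hB : MeasurableSet B) : tauMeas Q w B = Q (cylN w ∩ shiftN n ⁻¹' B) := by
  rw [tauMeas, Measure.map_apply (measurable_shiftN n) hB,
    Measure.restrict_apply (measurable_shiftN n hB), Set.inter_comm]

namespace IsBernoulli

variable {p : ℝ} {ν : Measure (ℕ → Bool)}

lemma measure_cylN (h : IsBernoulli p ν) {n : ℕ} (w : Fin n → Bool) :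
    ν (cylN w) = ∏ i : Fin n, (if w i then ENNReal.ofReal p else ENNReal.ofReal (1 - p)) :=
  h.2 n w

lemma measure_cylN_eq_ofReal (h : IsBernoulli p ν) (hp : p ∈ Set.Icc (0 : ℝ) 1) {n : ℕ}
    (w : Fin n → Bool) :
    ν (cylN w) = ENNReal.ofReal (p ^ ones w * (1 - p) ^ (n - ones w)) := by
  classical
  have hzeros : (Finset.univ.filter fun i : Fin n => ¬ w i = true).card = n - ones w := by
    rw [ones, Finset.filter_not, Finset.card_sdiff_of_subset (Finset.filter_subset _ _),
      Finset.card_univ, Fintype.card_fin]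
  rw [h.measure_cylN, Finset.prod_ite, Finset.prod_const, Finset.prod_const, hzeros,
    ENNReal.ofReal_mul (pow_nonneg hp.1 _), ENNReal.ofReal_pow hp.1,
    ENNReal.ofReal_pow (sub_nonneg.2 hp.2), ones]

lemma tauMeas_eq (h : IsBernoulli p ν) {n : ℕ} (w : Fin n → Bool) :
    tauMeas ν w = ν (cylN w) • ν := by
  have : IsProbabilityMeasure ν := h.1
  have : IsFiniteMeasure (tauMeas ν w) := by unfold tauMeas; infer_instance
  refine ext_of_generate_finite initialCylinders generateFrom_initialCylinders.symm
    isPiSystem_initialCylinders ?_ ?_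
  · rintro _ ⟨m, v, rfl⟩
    rw [tauMeas_apply _ _ (measurableSet_cylN v), ← cylN_append, Measure.smul_apply, smul_eq_mul,
      h.measure_cylN, h.measure_cylN, h.measure_cylN, Fin.prod_univ_add]
    simp only [Fin.append_left, Fin.append_right]
  · rw [tauMeas_apply _ _ MeasurableSet.univ]
    simp

end IsBernoulli

noncomputable def cylIndicator {n : ℕ} (w : Fin n → Bool) : C(ℕ → Bool, ℝ) :=
  ⟨(cylN w).indicator 1, (isClopen_cylN w).continuous_indicator continuous_const⟩

lemma funcOf_cylIndicator (μ : Measure (ℕ → Bool)) {n : ℕ} (w : Fin n → Bool) :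
    funcOf μ (cylIndicator w) = μ.real (cylN w) :=
  integral_indicator_one (measurableSet_cylN w)

lemma IsBernoulli.funcOf_cylIndicator_true {p : ℝ} {ν : Measure (ℕ → Bool)}
    (h : IsBernoulli p ν) (hp : 0 ≤ p) (n : ℕ) :
    funcOf ν (cylIndicator fun _ : Fin n => true) = p ^ n := by
  rw [funcOf_cylIndicator, measureReal_def, h.measure_cylN]
  simp [← ENNReal.ofReal_pow hp, ENNReal.toReal_ofReal (pow_nonneg hp n)]

lemma linearIndepOn_of_apply_eq_pow {K X ι : Type*} [CommRing K] [IsDomain K]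
    {F : ι → X → K} {s : Set ι} (c : ι → K) (hc : Set.InjOn c s) (x : ℕ → X)
    (hF : ∀ i ∈ s, ∀ n, F i (x n) = c i ^ n) :
    LinearIndepOn K F s := by
  -- Dedekind: the sequences `n ↦ c i ^ n` are distinct characters of `Multiplicative ℕ`.
  refine LinearIndependent.of_comp (LinearMap.funLeft K K (x ∘ Multiplicative.toAdd)) ?_
  convert (linearIndependent_monoidHom (Multiplicative ℕ) K).comp
    (fun i : s => powersHom K (c i))
    ((powersHom K).injective.comp (Set.injOn_iff_injective.1 hc)) using 1
  ext i n
  exact hF i i.2 n.toAdd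

lemma LinearIndepOn.span_image_ne_span_of_countable {K V ι : Type*} [Field K] [AddCommGroup V]
    [Module K V] {v : ι → V} {s : Set ι} (hv : LinearIndepOn K v s) (hs : ¬ s.Countable)
    {S : Set V} (hS : S.Countable) : Submodule.span K (v '' s) ≠ Submodule.span K S := by
  intro heq
  have hrank : Cardinal.mk (v '' s) ≤ Cardinal.mk S := by
    rw [← rank_span_set hv.id_image, heq]
    exact rank_span_le S
  have himage : (v '' s).Countable := Cardinal.le_aleph0_iff_set_countable.1
    (hrank.trans (Cardinal.le_aleph0_iff_set_countable.2 hS))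
  exact hs ((Set.mapsTo_image v s).countable_of_injOn hv.injOn himage)

theorem stmt17_general (νB : ℝ → Measure (ℕ → Bool))
    (hB : ∀ p ∈ Set.Icc (0 : ℝ) 1, IsBernoulli p (νB p))
    (Pn : Measure (ℕ → Bool))
    (hPn : ∀ B : Set (ℕ → Bool), MeasurableSet B →
      Pn B = ∫⁻ p in Set.Icc (0 : ℝ) 1, νB p B) :
    -- the conditioned measures are mixtures with polynomial densities
    (∀ (n : ℕ) (w : Fin n → Bool) (B : Set (ℕ → Bool)), MeasurableSet B →
      tauMeas Pn w B =
        ∫⁻ p in Set.Icc (0 : ℝ) 1,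
          ENNReal.ofReal (p ^ (ones w) * (1 - p) ^ (n - ones w)) * νB p B) ∧
    -- V_P has a countable spanning set
    (∃ S : Set (C((ℕ → Bool), ℝ) → ℝ), S.Countable ∧
      Submodule.span ℝ {g | ∃ (n : ℕ) (w : Fin n → Bool), g = funcOf (tauMeas Pn w)} =
        Submodule.span ℝ S) ∧
    -- span{P_p : p ∈ [0,1]} has no countable spanning set
    ¬ ∃ S : Set (C((ℕ → Bool), ℝ) → ℝ), S.Countable ∧
      Submodule.span ℝ ((fun p => funcOf (νB p)) '' Set.Icc (0 : ℝ) 1) =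
        Submodule.span ℝ S := by
  refine ⟨fun n w B hBm => ?_, ⟨_, ?_, rfl⟩, ?_⟩
  · rw [tauMeas_apply Pn w hBm, hPn _ ((measurableSet_cylN w).inter (measurable_shiftN n hBm))]
    refine setLIntegral_congr_fun measurableSet_Icc fun p hp => ?_
    rw [← tauMeas_apply _ w hBm, (hB p hp).tauMeas_eq, Measure.smul_apply, smul_eq_mul,
      (hB p hp).measure_cylN_eq_ofReal hp]
  · exact (Set.countable_range fun x : (Σ n, Fin n → Bool) => funcOf (tauMeas Pn x.2)).mono
      (by rintro _ ⟨n, w, rfl⟩; exact ⟨⟨n, w⟩, rfl⟩)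
  · rintro ⟨S, hS, hspan⟩
    have hindep : LinearIndepOn ℝ (fun p => funcOf (νB p)) (Set.Icc (0 : ℝ) 1) :=
      linearIndepOn_of_apply_eq_pow id (Set.injOn_id _)
        (fun n => cylIndicator fun _ : Fin n => true)
        fun p hp n => (hB p hp).funcOf_cylIndicator_true hp.1 n
    exact hindep.span_image_ne_span_of_countable (by simp) hS hspan

/-- For the uniform Bernoulli mixture `P_ℕ = ∫_0^1 P_p dp` and a word `w` of
length `n` with `k` ones, `τ_w(P_ℕ) = ∫_0^1 p^k (1-p)^{n-k} P_p dp`.  Hence the canonical OOM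
vector space `V_P` is the span of a countable set, whereas `span{P_p : p ∈ [0,1]}` has no
countable spanning set. -/
theorem stmt17 (νB : ℝ → Measure (ℕ → Bool))
    (hB : ∀ p ∈ Set.Icc (0 : ℝ) 1, IsBernoulli p (νB p))
    (Pn : Measure (ℕ → Bool)) [IsProbabilityMeasure Pn]
    (hPn : ∀ B : Set (ℕ → Bool), MeasurableSet B →
      Pn B = ∫⁻ p in Set.Icc (0 : ℝ) 1, νB p B) :
    -- the conditioned measures are mixtures with polynomial densities
    (∀ (n : ℕ) (w : Fin n → Bool) (B : Set (ℕ → Bool)), MeasurableSet B →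
      tauMeas Pn w B =
        ∫⁻ p in Set.Icc (0 : ℝ) 1,
          ENNReal.ofReal (p ^ (ones w) * (1 - p) ^ (n - ones w)) * νB p B) ∧
    -- V_P has a countable spanning set
    (∃ S : Set (C((ℕ → Bool), ℝ) → ℝ), S.Countable ∧
      Submodule.span ℝ {g | ∃ (n : ℕ) (w : Fin n → Bool), g = funcOf (tauMeas Pn w)} =
        Submodule.span ℝ S) ∧
    -- span{P_p : p ∈ [0,1]} has no countable spanning set
    ¬ ∃ S : Set (C((ℕ → Bool), ℝ) → ℝ), S.Countable ∧
      Submodule.span ℝ ((fun p => funcOf (νB p)) '' Set.Icc (0 : ℝ) 1) =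
        Submodule.span ℝ S :=
  stmt17_general νB hB Pn hPn
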